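/- Let d ≥ 3 and let A ∈ ℂ^{d×d} satisfy condition (C_d) with det(A) = (−1)^{d−1}. Then w_M(π/d) ≥ cos(π/d)·w_M(0). -/

import Mathlib

open Matrix Complex

/-- Condition `(C_d)`. -/
def CondC {d : ℕ} (A : Matrix (Fin d) (Fin d) ℂ) : Prop :=
  ∃ P : Polynomial ℝ, ∀ θ : ℝ, ∀ w : ℂ,
    (w • (1 : Matrix (Fin d) (Fin d) ℂ)
        - (1/2 : ℂ) • (Complex.exp (-(θ : ℂ) * Complex.I) • A
            + Complex.exp ((θ : ℂ) * Complex.I) • Aᴴ)).det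
      = Polynomial.aeval w P
        - ((-1/2 : ℂ)) ^ (d - 1)
            * ((Complex.exp (-(d : ℂ) * (θ : ℂ) * Complex.I) * A.det).re : ℂ)

/-- `wM A θ` is the largest eigenvalue of the Hermitian matrix
`(1/2)(e^{−iθ}A + e^{iθ}A*)` (all its eigenvalues are real). -/
noncomputable def wM {d : ℕ} (A : Matrix (Fin d) (Fin d) ℂ) (θ : ℝ) : ℝ :=
  sSup { μ : ℝ | ∃ x : Fin d → ℂ, x ≠ 0 ∧
    ((1/2 : ℂ) • (Complex.exp (-(θ : ℂ) * Complex.I) • A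
        + Complex.exp ((θ : ℂ) * Complex.I) • Aᴴ)).mulVec x = (μ : ℂ) • x }


section Aux
open scoped ComplexOrder
variable {d : ℕ}

lemma det_factor {B : Matrix (Fin d) (Fin d) ℂ} (hB : B.IsHermitian) (w : ℂ) :
    (w • (1 : Matrix (Fin d) (Fin d) ℂ) - B).det
      = ∏ i, (w - (hB.eigenvalues i : ℂ)) := by
  set U : Matrix (Fin d) (Fin d) ℂ := (Matrix.IsHermitian.eigenvectorUnitary hB : Matrix (Fin d) (Fin d) ℂ)
  have hU : U * star U = 1 := (Matrix.mem_unitaryGroup_iff).mp (Matrix.IsHermitian.eigenvectorUnitary hB).2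
  have h1 : w • (1 : Matrix (Fin d) (Fin d) ℂ) - B
      = U * (w • (1 : Matrix (Fin d) (Fin d) ℂ) - diagonal (RCLike.ofReal ∘ hB.eigenvalues)) * star U := by
    rw [mul_sub, sub_mul]
    congr 1
    · rw [Matrix.mul_smul, mul_one, Matrix.smul_mul, hU]
    · exact hB.spectral_theorem
  rw [h1, det_mul, det_mul, mul_comm (U.det), mul_assoc, ← det_mul, hU, det_one, mul_one]
  have h2 : w • (1 : Matrix (Fin d) (Fin d) ℂ) - diagonal (RCLike.ofReal ∘ hB.eigenvalues)
      = diagonal (fun i => w - (hB.eigenvalues i : ℂ)) := by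
    rw [smul_one_eq_diagonal, diagonal_sub]
    rfl
  rw [h2, det_diagonal]

noncomputable def Hmat (A : Matrix (Fin d) (Fin d) ℂ) (θ : ℝ) : Matrix (Fin d) (Fin d) ℂ :=
  (1/2 : ℂ) • (Complex.exp (-(θ : ℂ) * Complex.I) • A
        + Complex.exp ((θ : ℂ) * Complex.I) • Aᴴ)

lemma Hmat_herm (A : Matrix (Fin d) (Fin d) ℂ) (θ : ℝ) : (Hmat A θ).IsHermitian := by
  unfold Hmat Matrix.IsHermitian
  rw [conjTranspose_smul, conjTranspose_add, conjTranspose_smul, conjTranspose_smul,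
    conjTranspose_conjTranspose]
  have h1 : (starRingEnd ℂ) (Complex.exp (-(θ:ℂ) * Complex.I)) = Complex.exp ((θ:ℂ) * Complex.I) := by
    rw [← Complex.exp_conj]; congr 1
    simp [Complex.conj_I, Complex.conj_ofReal]
  have h2 : (starRingEnd ℂ) (Complex.exp ((θ:ℂ) * Complex.I)) = Complex.exp (-(θ:ℂ) * Complex.I) := by
    rw [← Complex.exp_conj]; congr 1
    simp [Complex.conj_I, Complex.conj_ofReal]
  simp only [Complex.star_def, h1, h2]
  rw [add_comm, show ((starRingEnd ℂ) (1/2 : ℂ)) = (1/2:ℂ) from by simp [map_ofNat]]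

def S (A : Matrix (Fin d) (Fin d) ℂ) (θ : ℝ) : Set ℝ :=
  { μ : ℝ | ∃ x : Fin d → ℂ, x ≠ 0 ∧ (Hmat A θ).mulVec x = (μ : ℂ) • x }

lemma mem_S_iff_det {A : Matrix (Fin d) (Fin d) ℂ} {θ : ℝ} {μ : ℝ} :
    μ ∈ S A θ ↔ ((μ : ℂ) • (1 : Matrix (Fin d) (Fin d) ℂ) - Hmat A θ).det = 0 := by
  rw [← Matrix.exists_mulVec_eq_zero_iff]
  constructor
  · rintro ⟨x, hx, hex⟩
    exact ⟨x, hx, by rw [sub_mulVec, smul_mulVec, one_mulVec, hex, sub_self]⟩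
  · rintro ⟨x, hx, hex⟩
    refine ⟨x, hx, ?_⟩
    rw [sub_mulVec, smul_mulVec, one_mulVec, sub_eq_zero] at hex
    exact hex.symm

lemma S_eq_range {A : Matrix (Fin d) (Fin d) ℂ} {θ : ℝ} :
    S A θ = Set.range (Hmat_herm A θ).eigenvalues := by
  ext μ
  rw [mem_S_iff_det, det_factor (Hmat_herm A θ), Finset.prod_eq_zero_iff]
  constructor
  · rintro ⟨i, -, hi⟩
    exact ⟨i, by exact_mod_cast (sub_eq_zero.mp hi).symm⟩
  · rintro ⟨i, hi⟩
    exact ⟨i, Finset.mem_univ i, by rw [sub_eq_zero]; exact_mod_cast hi.symm⟩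


lemma wM_eq_sSup_S (A : Matrix (Fin d) (Fin d) ℂ) (θ : ℝ) : wM A θ = sSup (S A θ) := rfl

lemma S_finite (A : Matrix (Fin d) (Fin d) ℂ) (θ : ℝ) : (S A θ).Finite := by
  rw [S_eq_range]; exact Set.finite_range _

lemma S_nonempty (hd : 0 < d) (A : Matrix (Fin d) (Fin d) ℂ) (θ : ℝ) : (S A θ).Nonempty := by
  rw [S_eq_range]; exact ⟨_, ⟨⟨0, hd⟩, rfl⟩⟩

lemma wM_mem (hd : 0 < d) (A : Matrix (Fin d) (Fin d) ℂ) (θ : ℝ) : wM A θ ∈ S A θ := by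
  rw [wM_eq_sSup_S]
  exact (S_nonempty hd A θ).csSup_mem (S_finite A θ)

lemma le_wM {A : Matrix (Fin d) (Fin d) ℂ} {θ : ℝ} {μ : ℝ} (h : μ ∈ S A θ) : μ ≤ wM A θ :=
  le_csSup (S_finite A θ).bddAbove h

lemma psd_aux (A : Matrix (Fin d) (Fin d) ℂ) (θ : ℝ) :
    (((wM A θ : ℂ)) • (1 : Matrix (Fin d) (Fin d) ℂ) - Hmat A θ).PosSemidef := by
  set c := wM A θ with hc
  set B := Hmat A θ with hBdef
  have hB := Hmat_herm A θ
  have hM : ((c : ℂ) • (1 : Matrix (Fin d) (Fin d) ℂ) - B).IsHermitian := by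
    unfold Matrix.IsHermitian
    rw [conjTranspose_sub, conjTranspose_smul, conjTranspose_one, hB]
    congr 1
    simp [Complex.star_def, Complex.conj_ofReal]
  refine (Matrix.IsHermitian.posSemidef_iff_eigenvalues_nonneg hM).mpr ?_
  intro i
  by_contra hneg
  push_neg at hneg
  set μ := hM.eigenvalues i with hμ
  have hdet0 : (((μ : ℂ)) • (1 : Matrix (Fin d) (Fin d) ℂ) - ((c : ℂ) • 1 - B)).det = 0 := by
    rw [det_factor hM]
    exact Finset.prod_eq_zero (Finset.mem_univ i) (by rw [sub_self])
  have heq : (((c - μ : ℝ) : ℂ)) • (1 : Matrix (Fin d) (Fin d) ℂ) - B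
      = -(((μ : ℂ)) • (1 : Matrix (Fin d) (Fin d) ℂ) - ((c : ℂ) • 1 - B)) := by
    push_cast
    module
  have hmem : (c - μ) ∈ S A θ := by
    rw [mem_S_iff_det, heq, Matrix.det_neg, hdet0, mul_zero]
  have := le_wM hmem
  rw [Pi.zero_apply] at hneg
  linarith

lemma rayleigh (A : Matrix (Fin d) (Fin d) ℂ) (θ : ℝ) (x : Fin d → ℂ) :
    (star x ⬝ᵥ (Hmat A θ) *ᵥ x).re ≤ wM A θ * (star x ⬝ᵥ x).re := by
  have h0 := (psd_aux A θ).dotProduct_mulVec_nonneg x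
  have h : (0:ℝ) ≤ ((star x ⬝ᵥ ((wM A θ : ℂ) • (1 : Matrix (Fin d) (Fin d) ℂ) - Hmat A θ) *ᵥ x)).re := by
    simpa using (Complex.le_def.mp h0).1
  rw [sub_mulVec, smul_mulVec, one_mulVec, dotProduct_sub, dotProduct_smul] at h
  simp only [Complex.sub_re, smul_eq_mul, Complex.re_ofReal_mul] at h
  linarith

lemma dot_Hmat (A : Matrix (Fin d) (Fin d) ℂ) (θ : ℝ) (x : Fin d → ℂ) :
    star x ⬝ᵥ (Hmat A θ) *ᵥ x
      = (((Complex.exp (-(θ : ℂ) * Complex.I) * (star x ⬝ᵥ A *ᵥ x)).re : ℝ) : ℂ) := by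
  set z := star x ⬝ᵥ A *ᵥ x with hz
  have hconj : star x ⬝ᵥ Aᴴ *ᵥ x = (starRingEnd ℂ) z := by
    rw [hz]
    have h1 : (starRingEnd ℂ) (star x ⬝ᵥ A *ᵥ x) = star (A *ᵥ x) ⬝ᵥ x := by
      rw [Matrix.star_dotProduct, ← Complex.star_def, star_star]
    rw [h1, Matrix.star_mulVec, ← Matrix.dotProduct_mulVec]
  have hexp : Complex.exp ((θ : ℂ) * Complex.I)
      = (starRingEnd ℂ) (Complex.exp (-(θ : ℂ) * Complex.I)) := by
    rw [← Complex.exp_conj]; congr 1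
    simp [Complex.conj_I, Complex.conj_ofReal]
  unfold Hmat
  rw [smul_mulVec, add_mulVec, smul_mulVec, smul_mulVec,
    dotProduct_smul, dotProduct_add, dotProduct_smul, dotProduct_smul, ← hz, hconj, hexp]
  rw [smul_eq_mul, smul_eq_mul, smul_eq_mul, ← _root_.map_mul]
  rw [Complex.add_conj]
  push_cast
  ring

lemma norm_pos {x : Fin d → ℂ} (hx : x ≠ 0) : 0 < (star x ⬝ᵥ x).re := by
  have h1 : star x ⬝ᵥ x = ((∑ i, Complex.normSq (x i) : ℝ) : ℂ) := by
    unfold dotProduct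
    push_cast
    refine Finset.sum_congr rfl fun i _ => ?_
    simp [Complex.star_def, Complex.normSq_eq_conj_mul_self]
  rw [h1, Complex.ofReal_re]
  obtain ⟨i, hi⟩ := Function.ne_iff.mp hx
  have : 0 < Complex.normSq (x i) := Complex.normSq_pos.mpr hi
  refine Finset.sum_pos' (fun j _ => Complex.normSq_nonneg _) ⟨i, Finset.mem_univ i, this⟩

lemma S_symm {A : Matrix (Fin d) (Fin d) ℂ} (hC : CondC A)
    (hdet : A.det = (-1 : ℂ) ^ (d - 1)) (θ : ℝ) : S A θ = S A (-θ) := by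
  obtain ⟨P, hP⟩ := hC
  have hre : ∀ φ : ℝ, (Complex.exp (-(d : ℂ) * (φ : ℂ) * Complex.I) * A.det).re
      = (-1 : ℝ) ^ (d - 1) * Real.cos (d * φ) := by
    intro φ
    rw [hdet]
    have e1 : (-(d : ℂ) * (φ : ℂ) * Complex.I) = ((-(d * φ) : ℝ) : ℂ) * Complex.I := by
      push_cast; ring
    have e2 : ((-1 : ℂ)) ^ (d - 1) = (((-1 : ℝ) ^ (d - 1) : ℝ) : ℂ) := by push_cast; ring
    rw [e1, e2, mul_comm, Complex.re_ofReal_mul, Complex.exp_ofReal_mul_I_re, Real.cos_neg]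
  have hkey : ∀ w : ℂ, (w • (1 : Matrix (Fin d) (Fin d) ℂ) - Hmat A θ).det
      = (w • (1 : Matrix (Fin d) (Fin d) ℂ) - Hmat A (-θ)).det := by
    intro w
    unfold Hmat
    rw [hP θ w, hP (-θ) w, hre θ, hre (-θ), mul_neg, Real.cos_neg]
  ext μ
  rw [mem_S_iff_det, mem_S_iff_det, hkey]

end Aux

theorem stmt11 {d : ℕ} (hd : 3 ≤ d) (A : Matrix (Fin d) (Fin d) ℂ)
    (hC : CondC A) (hdet : A.det = (-1 : ℂ) ^ (d - 1)) :
    Real.cos (Real.pi / d) * wM A 0 ≤ wM A (Real.pi / d) := by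
  have hd0 : 0 < d := by omega
  have hsymm : wM A (-(Real.pi / d)) = wM A (Real.pi / d) := by
    rw [wM_eq_sSup_S, wM_eq_sSup_S, ← S_symm hC hdet]
  obtain ⟨x, hx, hex⟩ := wM_mem hd0 A 0
  set μ0 := wM A 0 with hμ0
  set z := star x ⬝ᵥ A *ᵥ x with hzdef
  set n := (star x ⬝ᵥ x).re with hndef
  have hn : 0 < n := norm_pos hx
  have hdot : ∀ θ : ℝ, (Complex.exp (-(θ : ℂ) * Complex.I) * z).re ≤ wM A θ * n := by
    intro θ
    have h := rayleigh A θ x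
    rw [dot_Hmat A θ x, Complex.ofReal_re] at h
    exact h
  have hz0 : z.re = μ0 * n := by
    have h1 : star x ⬝ᵥ (Hmat A 0) *ᵥ x = (μ0 : ℂ) * (star x ⬝ᵥ x) := by
      rw [show (Hmat A 0) *ᵥ x = ((μ0 : ℝ) : ℂ) • x from hex, dotProduct_smul, smul_eq_mul]
    have h2 := dot_Hmat A 0 x
    rw [h1] at h2
    have h3 := congrArg Complex.re h2
    simpa [Complex.re_ofReal_mul] using h3.symm
  have hre : ∀ t : ℝ, (Complex.exp (-(t : ℂ) * Complex.I) * z).re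
      = Real.cos t * z.re + Real.sin t * z.im := by
    intro t
    have e1 : (-(t : ℂ) * Complex.I) = ((-t : ℝ) : ℂ) * Complex.I := by push_cast; ring
    rw [e1, Complex.mul_re, Complex.exp_ofReal_mul_I_re, Complex.exp_ofReal_mul_I_im,
      Real.cos_neg, Real.sin_neg]
    ring
  have hA1 := hdot (Real.pi / d)
  have hA2 := hdot (-(Real.pi / d))
  rw [hsymm] at hA2
  rw [hre] at hA1 hA2
  rw [Real.cos_neg, Real.sin_neg] at hA2
  rw [hz0] at hA1 hA2
  nlinarith [hA1, hA2, hn]
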